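/- Let c > 0 and χ > 0, and let 𝐁, 𝐄 : ℝ × ℝ³ → ℝ³ and ψ : ℝ × ℝ³ → ℝ be functions of time t and space x that are sufficiently smooth (four times continuously differentiable). Suppose the corrected Faraday equation ∂ₜ𝐁 + ∇×𝐄 + χ∇ψ = 0 and the correction-potential equation ∂ₜψ + χc²(∇·𝐁) = 0 hold everywhere. Then the divergence constraint error d := ∇·𝐁 satisfies the wave equation ∂ₜ²d = χ²c² Δd, i.e., the error in the constraint ∇·𝐁 = 0 propagates with speed cχ. -/

import Mathlib

noncomputable section

/-- The `i`-th standard basis vector of `ℝ³ = Fin 3 → ℝ`. -/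
def sb (i : Fin 3) : Fin 3 → ℝ := Pi.single i 1

/-- Partial derivative in time (the first, `ℝ`, argument). -/
def pt3 {E : Type*} [NormedAddCommGroup E] [NormedSpace ℝ E]
    (f : ℝ × (Fin 3 → ℝ) → E) (p : ℝ × (Fin 3 → ℝ)) : E :=
  fderiv ℝ f p (1, 0)

/-- Spatial partial derivative in the `i`-th coordinate direction. -/
def pd3 {E : Type*} [NormedAddCommGroup E] [NormedSpace ℝ E]
    (i : Fin 3) (f : ℝ × (Fin 3 → ℝ) → E) (p : ℝ × (Fin 3 → ℝ)) : E :=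
  fderiv ℝ f p (0, sb i)

/-- Spatial divergence of a vector field. -/
def div3 (F : ℝ × (Fin 3 → ℝ) → (Fin 3 → ℝ)) (p : ℝ × (Fin 3 → ℝ)) : ℝ :=
  ∑ i, pd3 i (fun q => F q i) p

/-- Spatial curl of a vector field. -/
def curl3 (F : ℝ × (Fin 3 → ℝ) → (Fin 3 → ℝ)) (p : ℝ × (Fin 3 → ℝ)) : Fin 3 → ℝ :=
  ![pd3 1 (fun q => F q 2) p - pd3 2 (fun q => F q 1) p,
    pd3 2 (fun q => F q 0) p - pd3 0 (fun q => F q 2) p,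
    pd3 0 (fun q => F q 1) p - pd3 1 (fun q => F q 0) p]

/-- Spatial gradient of a scalar field. -/
def grad3 (f : ℝ × (Fin 3 → ℝ) → ℝ) (p : ℝ × (Fin 3 → ℝ)) : Fin 3 → ℝ :=
  fun i => pd3 i f p

/-- Spatial Laplacian of a scalar field. -/
def lap3 (f : ℝ × (Fin 3 → ℝ) → ℝ) (p : ℝ × (Fin 3 → ℝ)) : ℝ :=
  ∑ i, pd3 i (fun q => pd3 i f q) p

/-! Taking the divergence of the corrected Faraday law kills the curl term, since mixed partial
derivatives of `E` commute; hence `∂ₜ(∇·B) = -χ Δψ`. Differentiating once more in time and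
commuting `∂ₜ` with `Δ`, the cleaning equation `∂ₜψ = -χc² ∇·B` turns this into
`∂ₜ²(∇·B) = χ²c² Δ(∇·B)`. -/

open Finset

section DirectionalDerivative

variable {V F : Type*} [NormedAddCommGroup V] [NormedSpace ℝ V]
  [NormedAddCommGroup F] [NormedSpace ℝ F]

theorem ContDiff.fderiv_apply_const {f : V → F} {m n : WithTop ℕ∞} (hf : ContDiff ℝ n f)
    (hmn : m + 1 ≤ n) (v : V) : ContDiff ℝ m fun q => fderiv ℝ f q v :=
  (hf.fderiv_right hmn).clm_apply contDiff_const

theorem fderiv_fderiv_apply_const {f : V → F} {p : V}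
    (hf : DifferentiableAt ℝ (fderiv ℝ f) p) (v w : V) :
    fderiv ℝ (fun q => fderiv ℝ f q v) p w = fderiv ℝ (fderiv ℝ f) p w v := by
  rw [fderiv_clm_apply hf (differentiableAt_const v)]
  simp

theorem fderiv_fderiv_apply_comm {f : V → F} (hf : ContDiff ℝ 2 f) (p v w : V) :
    fderiv ℝ (fun q => fderiv ℝ f q v) p w = fderiv ℝ (fun q => fderiv ℝ f q w) p v := by
  have hd : DifferentiableAt ℝ (fderiv ℝ f) p :=
    (hf.fderiv_right (m := 1) le_rfl).differentiable one_ne_zero p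
  rw [fderiv_fderiv_apply_const hd, fderiv_fderiv_apply_const hd]
  exact hf.contDiffAt.isSymmSndFDerivAt (by simp [minSmoothness_of_isRCLikeNormedField]) w v

theorem fderiv_const_smul_apply (a : ℝ) (f : V → F) (p v : V) :
    fderiv ℝ (fun q => a • f q) p v = a • fderiv ℝ f p v := by
  rw [show (fun q => a • f q) = a • f from rfl, fderiv_const_smul_field]
  rfl

theorem fderiv_pi_apply {ι : Type*} [Fintype ι] {f : V → ι → ℝ} {p : V}
    (hf : DifferentiableAt ℝ f p) (i : ι) (v : V) :
    fderiv ℝ (fun q => f q i) p v = fderiv ℝ f p v i := by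
  rw [fderiv_apply hf]
  rfl

end DirectionalDerivative

section VectorCalculus

variable {F : Type*} [NormedAddCommGroup F] [NormedSpace ℝ F]
  {B E : ℝ × (Fin 3 → ℝ) → (Fin 3 → ℝ)} {ψ : ℝ × (Fin 3 → ℝ) → ℝ}
  {m n : WithTop ℕ∞}

theorem ContDiff.pd3 {f : ℝ × (Fin 3 → ℝ) → F} (hf : ContDiff ℝ n f) (hmn : m + 1 ≤ n)
    (i : Fin 3) : ContDiff ℝ m (pd3 i f) :=
  hf.fderiv_apply_const hmn _

theorem ContDiff.pt3 {f : ℝ × (Fin 3 → ℝ) → F} (hf : ContDiff ℝ n f) (hmn : m + 1 ≤ n) :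
    ContDiff ℝ m (pt3 f) :=
  hf.fderiv_apply_const hmn _

theorem ContDiff.grad3 (hψ : ContDiff ℝ n ψ) (hmn : m + 1 ≤ n) : ContDiff ℝ m (grad3 ψ) :=
  contDiff_pi.2 (hψ.pd3 hmn)

theorem ContDiff.curl3 (hE : ContDiff ℝ n E) (hmn : m + 1 ≤ n) : ContDiff ℝ m (curl3 E) := by
  have h : ∀ i k, ContDiff ℝ m (_root_.pd3 i fun q => E q k) :=
    fun i k => (contDiff_pi.1 hE k).pd3 hmn i
  refine contDiff_pi.2 fun k => ?_
  fin_cases k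
  exacts [(h 1 2).sub (h 2 1), (h 2 0).sub (h 0 2), (h 0 1).sub (h 1 0)]

theorem pt3_pd3_comm {f : ℝ × (Fin 3 → ℝ) → F} (hf : ContDiff ℝ 2 f) (i : Fin 3)
    (p : ℝ × (Fin 3 → ℝ)) : pt3 (pd3 i f) p = pd3 i (pt3 f) p :=
  fderiv_fderiv_apply_comm hf p _ _

theorem pd3_pd3_comm {f : ℝ × (Fin 3 → ℝ) → F} (hf : ContDiff ℝ 2 f) (i j : Fin 3)
    (p : ℝ × (Fin 3 → ℝ)) : pd3 i (pd3 j f) p = pd3 j (pd3 i f) p :=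
  fderiv_fderiv_apply_comm hf p _ _

theorem pt3_const_mul (a : ℝ) (f : ℝ × (Fin 3 → ℝ) → ℝ) (p : ℝ × (Fin 3 → ℝ)) :
    pt3 (fun q => a * f q) p = a * pt3 f p :=
  fderiv_const_smul_apply a f p _

theorem pd3_const_mul (a : ℝ) (f : ℝ × (Fin 3 → ℝ) → ℝ) (i : Fin 3) (p : ℝ × (Fin 3 → ℝ)) :
    pd3 i (fun q => a * f q) p = a * pd3 i f p :=
  fderiv_const_smul_apply a f p _

theorem pd3_sub {f g : ℝ × (Fin 3 → ℝ) → F} {p : ℝ × (Fin 3 → ℝ)}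
    (hf : DifferentiableAt ℝ f p) (hg : DifferentiableAt ℝ g p) (i : Fin 3) :
    pd3 i (fun q => f q - g q) p = pd3 i f p - pd3 i g p := by
  rw [pd3, fderiv_fun_sub hf hg]
  rfl

theorem pd3_add {f g : ℝ × (Fin 3 → ℝ) → F} {p : ℝ × (Fin 3 → ℝ)}
    (hf : DifferentiableAt ℝ f p) (hg : DifferentiableAt ℝ g p) (i : Fin 3) :
    pd3 i (fun q => f q + g q) p = pd3 i f p + pd3 i g p := by
  rw [pd3, fderiv_fun_add hf hg]
  rfl

theorem pt3_sum {ι : Type*} (s : Finset ι) {g : ι → ℝ × (Fin 3 → ℝ) → F}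
    {p : ℝ × (Fin 3 → ℝ)} (hg : ∀ i ∈ s, DifferentiableAt ℝ (g i) p) :
    pt3 (fun q => ∑ i ∈ s, g i q) p = ∑ i ∈ s, pt3 (g i) p := by
  rw [pt3, fderiv_fun_sum hg]
  simp [pt3]

theorem div3_add {p : ℝ × (Fin 3 → ℝ)} (hB : DifferentiableAt ℝ B p)
    (hE : DifferentiableAt ℝ E p) : div3 (B + E) p = div3 B p + div3 E p := by
  simp only [div3, ← sum_add_distrib]
  exact sum_congr rfl fun i _ =>
    pd3_add (differentiableAt_pi.1 hB i) (differentiableAt_pi.1 hE i) i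

theorem div3_const_smul (a : ℝ) (B : ℝ × (Fin 3 → ℝ) → (Fin 3 → ℝ)) (p : ℝ × (Fin 3 → ℝ)) :
    div3 (a • B) p = a * div3 B p := by
  simp only [div3, mul_sum]
  exact sum_congr rfl fun i _ => pd3_const_mul a (fun q => B q i) i p

theorem div3_grad3 (ψ : ℝ × (Fin 3 → ℝ) → ℝ) : div3 (grad3 ψ) = lap3 ψ := rfl

theorem lap3_const_mul (a : ℝ) (f : ℝ × (Fin 3 → ℝ) → ℝ) (p : ℝ × (Fin 3 → ℝ)) :
    lap3 (fun q => a * f q) p = a * lap3 f p := by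
  simp only [lap3, pd3_const_mul, mul_sum]

theorem div3_curl3 (hE : ContDiff ℝ 2 E) (p : ℝ × (Fin 3 → ℝ)) : div3 (curl3 E) p = 0 := by
  have hEk : ∀ k, ContDiff ℝ 2 fun q => E q k := fun k => contDiff_pi.1 hE k
  have hd : ∀ i k, Differentiable ℝ (pd3 i fun q => E q k) :=
    fun i k => ((hEk k).pd3 (m := 1) (by norm_num) i).differentiable one_ne_zero
  simp only [div3, Fin.sum_univ_three, curl3, Matrix.cons_val_zero, Matrix.cons_val_one,
    Matrix.cons_val_two, Matrix.head_cons, Matrix.tail_cons]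
  rw [pd3_sub (hd 1 2 p) (hd 2 1 p), pd3_sub (hd 2 0 p) (hd 0 2 p), pd3_sub (hd 0 1 p) (hd 1 0 p),
    pd3_pd3_comm (hEk 2) 0 1, pd3_pd3_comm (hEk 1) 0 2, pd3_pd3_comm (hEk 0) 1 2]
  ring

theorem pt3_div3 (hB : ContDiff ℝ 2 B) (p : ℝ × (Fin 3 → ℝ)) :
    pt3 (div3 B) p = div3 (pt3 B) p := by
  have hBk : ∀ k, ContDiff ℝ 2 fun q => B q k := fun k => contDiff_pi.1 hB k
  have hd : ∀ k ∈ univ, DifferentiableAt ℝ (pd3 k fun q => B q k) p :=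
    fun k _ => ((hBk k).pd3 (m := 1) (by norm_num) k).differentiable one_ne_zero p
  have hpt : ∀ k, pt3 (fun q => B q k) = fun q => pt3 B q k :=
    fun k => funext fun q => fderiv_pi_apply (hB.differentiable two_ne_zero q) k _
  calc pt3 (div3 B) p = ∑ k, pt3 (pd3 k fun q => B q k) p := pt3_sum univ hd
    _ = ∑ k, pd3 k (pt3 fun q => B q k) p :=
      sum_congr rfl fun k _ => pt3_pd3_comm (hBk k) k p
    _ = div3 (pt3 B) p := by simp only [hpt]; rfl

theorem pt3_lap3 (hψ : ContDiff ℝ 3 ψ) (p : ℝ × (Fin 3 → ℝ)) :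
    pt3 (lap3 ψ) p = lap3 (pt3 ψ) p := by
  have hψi : ∀ i, ContDiff ℝ 2 (pd3 i ψ) := hψ.pd3 (by norm_num)
  have hd : ∀ i ∈ univ, DifferentiableAt ℝ (pd3 i (pd3 i ψ)) p :=
    fun i _ => ((hψi i).pd3 (m := 1) (by norm_num) i).differentiable one_ne_zero p
  have hcomm : ∀ i, pt3 (pd3 i ψ) = pd3 i (pt3 ψ) :=
    fun i => funext (pt3_pd3_comm (hψ.of_le (by norm_num)) i)
  calc pt3 (lap3 ψ) p = ∑ i, pt3 (pd3 i (pd3 i ψ)) p := pt3_sum univ hd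
    _ = ∑ i, pd3 i (pt3 (pd3 i ψ)) p := sum_congr rfl fun i _ => pt3_pd3_comm (hψi i) i p
    _ = lap3 (pt3 ψ) p := by simp only [hcomm]; rfl

theorem pt3_div3_of_faraday {χ : ℝ} (hB : ContDiff ℝ 2 B) (hE : ContDiff ℝ 2 E)
    (hψ : ContDiff ℝ 2 ψ) (faraday : ∀ p, pt3 B p + curl3 E p + χ • grad3 ψ p = 0)
    (p : ℝ × (Fin 3 → ℝ)) : pt3 (div3 B) p = -χ * lap3 ψ p := by
  have hBt : DifferentiableAt ℝ (pt3 B) p :=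
    (hB.pt3 (m := 1) (by norm_num)).differentiable one_ne_zero p
  have hEc : DifferentiableAt ℝ (curl3 E) p :=
    (hE.curl3 (m := 1) (by norm_num)).differentiable one_ne_zero p
  have hψg : DifferentiableAt ℝ (grad3 ψ) p :=
    (hψ.grad3 (m := 1) (by norm_num)).differentiable one_ne_zero p
  have hzero : div3 (pt3 B + curl3 E + χ • grad3 ψ) p = 0 := by
    rw [show pt3 B + curl3 E + χ • grad3 ψ = 0 from funext faraday]
    simp [div3, pd3]
  rw [div3_add (hBt.add hEc) (hψg.const_smul χ), div3_add hBt hEc, div3_const_smul,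
    div3_curl3 hE, div3_grad3, ← pt3_div3 hB] at hzero
  linarith

end VectorCalculus

theorem divergence_constraint_error_wave_equation_general
    (c χ : ℝ)
    (B E : ℝ × (Fin 3 → ℝ) → (Fin 3 → ℝ)) (ψ : ℝ × (Fin 3 → ℝ) → ℝ)
    (hB : ContDiff ℝ 4 B) (hE : ContDiff ℝ 4 E) (hψ : ContDiff ℝ 4 ψ)
    (faraday : ∀ p, pt3 B p + curl3 E p + χ • grad3 ψ p = 0)
    (cleaning : ∀ p, pt3 ψ p + χ * c ^ 2 * div3 B p = 0) :
    ∀ p, pt3 (fun q => pt3 (fun r => div3 B r) q) p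
      = χ ^ 2 * c ^ 2 * lap3 (fun q => div3 B q) p := by
  have hdivB : pt3 (div3 B) = fun q => -χ * lap3 ψ q :=
    funext (pt3_div3_of_faraday (hB.of_le (by norm_num)) (hE.of_le (by norm_num))
      (hψ.of_le (by norm_num)) faraday)
  have hlapψ : pt3 (lap3 ψ) = fun q => -(χ * c ^ 2) * lap3 (div3 B) q := by
    funext q
    have hψt : pt3 ψ = fun r => -(χ * c ^ 2) * div3 B r :=
      funext fun r => by linarith [cleaning r]
    rw [pt3_lap3 (hψ.of_le (by norm_num)), hψt, lap3_const_mul]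
  intro p
  calc pt3 (pt3 (div3 B)) p = -χ * pt3 (lap3 ψ) p := by rw [hdivB, pt3_const_mul]
    _ = χ ^ 2 * c ^ 2 * lap3 (div3 B) p := by rw [hlapψ]; ring

/-- **Wave equation for the divergence-constraint error.**
If the corrected Faraday equation `∂ₜ𝐁 + ∇×𝐄 + χ∇ψ = 0` and the
correction-potential equation `∂ₜψ + χc²(∇·𝐁) = 0` hold everywhere, then the
divergence constraint error `d := ∇·𝐁` satisfies `∂ₜ²d = χ²c² Δd`, i.e. the
error in the constraint `∇·𝐁 = 0` propagates with speed `cχ`. -/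
theorem divergence_constraint_error_wave_equation
    (c χ : ℝ) (hc : 0 < c) (hχ : 0 < χ)
    (B E : ℝ × (Fin 3 → ℝ) → (Fin 3 → ℝ)) (ψ : ℝ × (Fin 3 → ℝ) → ℝ)
    (hB : ContDiff ℝ 4 B) (hE : ContDiff ℝ 4 E) (hψ : ContDiff ℝ 4 ψ)
    (faraday : ∀ p, pt3 B p + curl3 E p + χ • grad3 ψ p = 0)
    (cleaning : ∀ p, pt3 ψ p + χ * c ^ 2 * div3 B p = 0) :
    ∀ p, pt3 (fun q => pt3 (fun r => div3 B r) q) p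
      = χ ^ 2 * c ^ 2 * lap3 (fun q => div3 B q) p :=
  divergence_constraint_error_wave_equation_general c χ B E ψ hB hE hψ faraday cleaning
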